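/- Dichotomy for the two-body problem: let α > 2, ω > 0, and consider two bodies with masses m₁, m₂ > 0, m₁ + m₂ = 1, and m₁x₁ + m₂x₂ = 0. Set E*(ω) = m₁m₂ α^{2/(2−α)} (1/2 − 1/α) (α^{2/(2+α)} ω^{(α−2)/(α+2)})^{2α/(α−2)} and A*(ω) = m₁m₂ α^{2/(2+α)} ω^{(α−2)/(α+2)}. Then the sets K⁺(ω) = {(x,ẋ) : E(x,ẋ) < E*(ω), |A(x,ẋ)| ≥ A*(ω), K_ω(x) ≥ 0} and K⁻(ω) = {(x,ẋ) : E(x,ẋ) < E*(ω), |A(x,ẋ)| ≥ A*(ω), K_ω(x) < 0} are invariant under the two-body flow; every solution in K⁺(ω) exists globally, and every solution in K⁻(ω) has a singularity in finite time. -/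

import Mathlib

/- STATEMENT 7: dichotomy for the planar two-body problem with exponent α > 2:
the sets K⁺(ω), K⁻(ω) (energy below E*(ω), angular momentum at least A*(ω), with the
sign of K_ω) are invariant; solutions in K⁺(ω) are global, solutions in K⁻(ω) singular. -/

namespace TwoBodyPaper

open Real Filter

noncomputable section

abbrev E2 := EuclideanSpace ℝ (Fin 2)

/-- The other body. -/
def other (i : Fin 2) : Fin 2 := if i = 0 then 1 else 0

/-- `U(x) = -m₁m₂/|x₁ - x₂|^α`. -/
def pot (α : ℝ) (m : Fin 2 → ℝ) (q : Fin 2 → E2) : ℝ := -(m 0 * m 1 / ‖q 0 - q 1‖ ^ α)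

/-- The two-body energy `E(x, ẋ)`. -/
def energy (α : ℝ) (m : Fin 2 → ℝ) (q v : Fin 2 → E2) : ℝ :=
  (1 / 2) * ∑ i, m i * ‖v i‖ ^ 2 + pot α m q

/-- The moment of inertia `I(x) = ∑ m_i |x_i|²`. -/
def inertia (m : Fin 2 → ℝ) (q : Fin 2 → E2) : ℝ := ∑ i, m i * ‖q i‖ ^ 2

/-- `K_ω(x) = ω² I(x) + α U(x)`. -/
def Kfun (α : ℝ) (m : Fin 2 → ℝ) (ω : ℝ) (q : Fin 2 → E2) : ℝ :=
  ω ^ 2 * inertia m q + α * pot α m q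

/-- The scalar cross product on the plane. -/
def cross2 (a b : E2) : ℝ := a 0 * b 1 - a 1 * b 0

/-- The (scalar) angular momentum `A(x, ẋ) = ∑ m_i x_i × ẋ_i`. -/
def angMom (m : Fin 2 → ℝ) (q v : Fin 2 → E2) : ℝ := ∑ i, m i * cross2 (q i) (v i)

/-- `ẍ_i = -∇_i U / m_i`. -/
def accel (α : ℝ) (m : Fin 2 → ℝ) (q : Fin 2 → E2) (i : Fin 2) : E2 :=
  (-(α * m (other i) / ‖q i - q (other i)‖ ^ (α + 2))) • (q i - q (other i))

/-- `E*(ω) = m₁m₂ α^{2/(2−α)} (1/2 − 1/α)(α^{2/(2+α)} ω^{(α−2)/(α+2)})^{2α/(α−2)}`. -/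
def Estar (α : ℝ) (m : Fin 2 → ℝ) (ω : ℝ) : ℝ :=
  m 0 * m 1 * α ^ (2 / (2 - α)) * (1 / 2 - 1 / α) *
    (α ^ (2 / (2 + α)) * ω ^ ((α - 2) / (α + 2))) ^ (2 * α / (α - 2))

/-- `A*(ω) = m₁m₂ α^{2/(2+α)} ω^{(α−2)/(α+2)}`. -/
def Astar (α : ℝ) (m : Fin 2 → ℝ) (ω : ℝ) : ℝ :=
  m 0 * m 1 * α ^ (2 / (2 + α)) * ω ^ ((α - 2) / (α + 2))

/-- Membership in `K⁺(ω)`. -/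
def memKplus (α : ℝ) (m : Fin 2 → ℝ) (ω : ℝ) (q v : Fin 2 → E2) : Prop :=
  energy α m q v < Estar α m ω ∧ Astar α m ω ≤ |angMom m q v| ∧ 0 ≤ Kfun α m ω q

/-- Membership in `K⁻(ω)`. -/
def memKminus (α : ℝ) (m : Fin 2 → ℝ) (ω : ℝ) (q v : Fin 2 → E2) : Prop :=
  energy α m q v < Estar α m ω ∧ Astar α m ω ≤ |angMom m q v| ∧ Kfun α m ω q < 0

/-- The time interval `[0, σ)` for `σ ∈ (0, ∞]`. -/
def Dom (σ : EReal) : Set ℝ := {t : ℝ | 0 ≤ t ∧ (t : EReal) < σ}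

/-- `x` (with velocity `v`) solves the planar two-body problem on the set `s`. -/
def IsSolnOn (α : ℝ) (m : Fin 2 → ℝ) (x v : ℝ → Fin 2 → E2) (s : Set ℝ) : Prop :=
  ∀ t ∈ s, x t 0 ≠ x t 1 ∧
    ∀ i, HasDerivAt (fun τ => x τ i) (v t i) t ∧ HasDerivAt (fun τ => v τ i) (accel α m (x t) i) t

/-- `x` is a solution on its maximal interval of existence `[0, σ)`. -/
def IsMaxSoln (α : ℝ) (m : Fin 2 → ℝ) (σ : EReal) (x v : ℝ → Fin 2 → E2) : Prop :=
  0 < σ ∧ IsSolnOn α m x v (Dom σ) ∧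
    ∀ (σ' : EReal) (x' v' : ℝ → Fin 2 → E2), IsSolnOn α m x' v' (Dom σ') →
      (∀ t ∈ Dom σ, x' t = x t ∧ v' t = v t) → σ' ≤ σ

open Set Topology

/-! ### Algebraic core -/

/-- The critical radius. -/
def rstar (α ω : ℝ) : ℝ := (α / ω ^ 2) ^ ((α + 2)⁻¹)

section Algebra

variable {α ω : ℝ} {m : Fin 2 → ℝ}

lemma alpha_pos (hα : 2 < α) : (0:ℝ) < α := lt_trans two_pos hα

lemma rstar_pos (hα : 2 < α) (hω : 0 < ω) : 0 < rstar α ω :=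
  rpow_pos_of_pos (div_pos (alpha_pos hα) (pow_pos hω 2)) _

lemma rstar_rpow (hα : 2 < α) (hω : 0 < ω) : rstar α ω ^ (α + 2) = α / ω ^ 2 := by
  rw [rstar, Real.rpow_inv_rpow (by positivity) (by nlinarith)]

lemma mu_pos (hm : ∀ i, 0 < m i) : 0 < m 0 * m 1 := mul_pos (hm 0) (hm 1)

lemma Astar_sq (hα : 2 < α) (hω : 0 < ω) (hm : ∀ i, 0 < m i) :
    Astar α m ω ^ 2 = α * (m 0 * m 1) ^ 2 * rstar α ω ^ (2 - α) := by
  have hα0 : (0:ℝ) < α := alpha_pos hα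
  have hρ := rstar_pos (ω := ω) hα hω
  have h1 : (0:ℝ) < Astar α m ω := by
    have := mu_pos hm
    unfold Astar; positivity
  have h2 : (0:ℝ) < α * (m 0 * m 1) ^ 2 * rstar α ω ^ (2 - α) := by
    have := mu_pos hm; positivity
  have hne : α + 2 ≠ 0 := by nlinarith
  have hm0 := hm 0
  have hm1 := hm 1
  have hlρ : log (rstar α ω) = (α + 2)⁻¹ * (log α - 2 * log ω) := by
    rw [rstar, log_rpow (by positivity), log_div (by positivity) (by positivity), log_pow]
    push_cast; ring
  apply Real.log_injOn_pos (mem_Ioi.2 (by positivity)) (mem_Ioi.2 h2)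
  rw [log_pow, Astar, log_mul (by positivity) (by positivity),
    log_mul (by positivity) (by positivity),
    log_mul (by positivity) (by positivity),
    log_rpow hα0, log_rpow hω, log_mul (by positivity) (by positivity),
    log_mul (by positivity) (by positivity), log_pow, log_rpow hρ, hlρ, log_mul hm0.ne' hm1.ne']
  push_cast
  field_simp
  ring

lemma Estar_eq (hα : 2 < α) (hω : 0 < ω) (hm : ∀ i, 0 < m i) :
    Estar α m ω = (m 0 * m 1) * (1 / 2 - 1 / α) * α * rstar α ω ^ (-α) := by
  have hα0 : (0:ℝ) < α := alpha_pos hα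
  have hρ := rstar_pos (ω := ω) hα hω
  have hm0 := hm 0
  have hm1 := hm 1
  have hc : (0:ℝ) < 1 / 2 - 1 / α := by
    have : 1 / α < 1 / 2 := by
      apply one_div_lt_one_div_of_lt <;> linarith
    linarith
  have hX : (0:ℝ) < α ^ (2 / (2 + α)) * ω ^ ((α - 2) / (α + 2)) := by positivity
  have hne1 : α + 2 ≠ 0 := by nlinarith
  have hne2 : α - 2 ≠ 0 := by nlinarith
  have hne3 : (2:ℝ) - α ≠ 0 := by nlinarith
  have hne4 : (2:ℝ) + α ≠ 0 := by nlinarith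
  have hlρ : log (rstar α ω) = (α + 2)⁻¹ * (log α - 2 * log ω) := by
    rw [rstar, log_rpow (by positivity), log_div (by positivity) (by positivity), log_pow]
    push_cast; ring
  apply Real.log_injOn_pos (mem_Ioi.2 (by unfold Estar; positivity)) (mem_Ioi.2 (by positivity))
  have eL : log (Estar α m ω) = log (m 0) + log (m 1) + 2 / (2 - α) * log α +
      log (1 / 2 - 1 / α) + 2 * α / (α - 2) * (2 / (2 + α) * log α + (α - 2) / (α + 2) * log ω) := by
    rw [Estar, log_mul (by positivity) (by positivity), log_mul (by positivity) (by positivity),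
      log_mul (by positivity) (by positivity), log_mul hm0.ne' hm1.ne', log_rpow hα0,
      log_rpow hX, log_mul (by positivity) (by positivity), log_rpow hα0, log_rpow hω]
  have eR : log (m 0 * m 1 * (1 / 2 - 1 / α) * α * rstar α ω ^ (-α)) =
      log (m 0) + log (m 1) + log (1 / 2 - 1 / α) + log α +
        (-α) * ((α + 2)⁻¹ * (log α - 2 * log ω)) := by
    rw [log_mul (by positivity) (by positivity), log_mul (by positivity) (by positivity),
      log_mul (by positivity) (by positivity), log_mul hm0.ne' hm1.ne', log_rpow hρ, hlρ]
  rw [eL, eR]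
  field_simp
  ring

lemma four_Estar (hα : 2 < α) (hω : 0 < ω) (hm : ∀ i, 0 < m i) :
    4 * Estar α m ω = (2 * α - 4) * (m 0 * m 1 * rstar α ω ^ (-α)) := by
  rw [Estar_eq hα hω hm]
  have hα0 : (0:ℝ) < α := alpha_pos hα
  field_simp
  ring

lemma smul_coord (c : ℝ) (a : E2) (i : Fin 2) : (c • a) i = c * a i := rfl

lemma neg_coord (a : E2) (i : Fin 2) : (-a) i = -(a i) := rfl

lemma sub_coord (a b : E2) (i : Fin 2) : (a - b) i = a i - b i := rfl

lemma cross2_smul (c d : ℝ) (a b : E2) :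
    cross2 (c • a) (d • b) = (c * d) * cross2 a b := by
  simp only [cross2, smul_coord]; ring

lemma norm_sq_E2 (a : E2) : ‖a‖ ^ 2 = a 0 ^ 2 + a 1 ^ 2 := by
  rw [EuclideanSpace.norm_eq, sq_sqrt (by positivity)]
  simp [Fin.sum_univ_two]

lemma abs_cross2_le (a b : E2) : |cross2 a b| ≤ ‖a‖ * ‖b‖ := by
  have h1 := norm_sq_E2 a
  have h2 := norm_sq_E2 b
  have ha := norm_nonneg a
  have hb := norm_nonneg b
  have hsq : cross2 a b ^ 2 ≤ (‖a‖ * ‖b‖) ^ 2 := by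
    unfold cross2; nlinarith [sq_nonneg (a 0 * b 0 + a 1 * b 1)]
  calc |cross2 a b| = √(cross2 a b ^ 2) := (Real.sqrt_sq_eq_abs _).symm
    _ ≤ √((‖a‖ * ‖b‖) ^ 2) := Real.sqrt_le_sqrt hsq
    _ = ‖a‖ * ‖b‖ := Real.sqrt_sq (by positivity)

/-- Decomposition of a zero-center-of-mass configuration. -/
lemma com_decomp (hm1 : m 0 + m 1 = 1) {q : Fin 2 → E2}
    (hq : m 0 • q 0 + m 1 • q 1 = 0) :
    q 0 = m 1 • (q 0 - q 1) ∧ q 1 = -(m 0) • (q 0 - q 1) := by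
  constructor
  · have hneg : m 0 • q 0 = -(m 1 • q 1) := eq_neg_of_add_eq_zero_left hq
    have e : m 1 • (q 0 - q 1) = (m 1 + m 0) • q 0 := by
      rw [add_smul, smul_sub, hneg]; abel
    rw [e, add_comm, hm1, one_smul]
  · have hneg : m 1 • q 1 = -(m 0 • q 0) := eq_neg_of_add_eq_zero_right hq
    have e : (-(m 0)) • (q 0 - q 1) = (m 0 + m 1) • q 1 := by
      rw [add_smul, neg_smul, smul_sub, hneg]; abel
    rw [e, hm1, one_smul]

lemma inertia_com (hm1 : m 0 + m 1 = 1) {q : Fin 2 → E2}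
    (hq : m 0 • q 0 + m 1 • q 1 = 0) :
    inertia m q = m 0 * m 1 * ‖q 0 - q 1‖ ^ 2 := by
  obtain ⟨h0, h1⟩ := com_decomp hm1 hq
  set w := q 0 - q 1 with hw
  rw [inertia, Fin.sum_univ_two, h0, h1, norm_smul, norm_smul, mul_pow, mul_pow]
  simp only [Real.norm_eq_abs, sq_abs]
  linear_combination (m 0 * m 1 * ‖w‖ ^ 2) * hm1

lemma kinetic_com (hm1 : m 0 + m 1 = 1) {v : Fin 2 → E2}
    (hv : m 0 • v 0 + m 1 • v 1 = 0) :
    ∑ i, m i * ‖v i‖ ^ 2 = m 0 * m 1 * ‖v 0 - v 1‖ ^ 2 := by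
  exact inertia_com hm1 hv

lemma angMom_com (hm1 : m 0 + m 1 = 1) {q v : Fin 2 → E2}
    (hq : m 0 • q 0 + m 1 • q 1 = 0) (hv : m 0 • v 0 + m 1 • v 1 = 0) :
    angMom m q v = m 0 * m 1 * cross2 (q 0 - q 1) (v 0 - v 1) := by
  obtain ⟨hq0, hq1⟩ := com_decomp hm1 hq
  obtain ⟨hv0, hv1⟩ := com_decomp hm1 hv
  set w := q 0 - q 1 with hw
  set w' := v 0 - v 1 with hw'
  rw [angMom, Fin.sum_univ_two, hq0, hq1, hv0, hv1, cross2_smul, cross2_smul]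
  linear_combination (m 0 * m 1 * cross2 w w') * hm1

lemma pot_eq (hm : ∀ i, 0 < m i) {q : Fin 2 → E2} (hne : q 0 ≠ q 1) :
    pot α m q = -(m 0 * m 1 * ‖q 0 - q 1‖ ^ (-α)) := by
  have hr : 0 < ‖q 0 - q 1‖ := by
    rw [norm_pos_iff, sub_ne_zero]; exact hne
  rw [pot, Real.rpow_neg hr.le, div_eq_mul_inv]

/-- Sign of `K_ω` in terms of the mutual distance. -/
lemma Kfun_nonneg_iff (hα : 2 < α) (hω : 0 < ω) (hm : ∀ i, 0 < m i)
    (hm1 : m 0 + m 1 = 1) {q : Fin 2 → E2}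
    (hq : m 0 • q 0 + m 1 • q 1 = 0) (hne : q 0 ≠ q 1) :
    (0 ≤ Kfun α m ω q ↔ rstar α ω ≤ ‖q 0 - q 1‖) := by
  have hα0 : (0:ℝ) < α := alpha_pos hα
  have hρ := rstar_pos (ω := ω) hα hω
  have hr : 0 < ‖q 0 - q 1‖ := by rw [norm_pos_iff, sub_ne_zero]; exact hne
  set r := ‖q 0 - q 1‖ with hrdef
  have hμ := mu_pos hm
  have key : Kfun α m ω q = m 0 * m 1 * r ^ (-α) * (ω ^ 2 * r ^ (α + 2) - α) := by
    rw [Kfun, inertia_com hm1 hq, pot_eq hm hne]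
    have h1 : r ^ (α + 2) = r ^ α * r ^ 2 := by
      rw [Real.rpow_add hr]
      congr 1
      rw [← Real.rpow_natCast r 2]
      norm_num
    have h2 : r ^ (-α) * r ^ α = 1 := by
      rw [← Real.rpow_add hr]; simp
    have h3 : (0:ℝ) < r ^ (-α) := Real.rpow_pos_of_pos hr _
    rw [h1]
    linear_combination (-(ω ^ 2 * (m 0 * m 1) * r ^ 2)) * h2
  rw [key]
  have h3 : (0:ℝ) < m 0 * m 1 * r ^ (-α) := by
    have := Real.rpow_pos_of_pos hr (-α); positivity
  rw [mul_nonneg_iff_of_pos_left h3, sub_nonneg,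
    ← div_le_iff₀' (by positivity : (0:ℝ) < ω ^ 2), ← rstar_rpow hα hω]
  exact Real.rpow_le_rpow_iff hρ.le hr.le (by linarith)

lemma Kfun_neg_iff (hα : 2 < α) (hω : 0 < ω) (hm : ∀ i, 0 < m i)
    (hm1 : m 0 + m 1 = 1) {q : Fin 2 → E2}
    (hq : m 0 • q 0 + m 1 • q 1 = 0) (hne : q 0 ≠ q 1) :
    (Kfun α m ω q < 0 ↔ ‖q 0 - q 1‖ < rstar α ω) := by
  rw [← not_le, ← not_le]
  exact not_congr (Kfun_nonneg_iff hα hω hm hm1 hq hne)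

lemma rpow_neg_anti (hα0 : 0 < α) {a b : ℝ} (ha : 0 < a) (hab : a ≤ b) :
    b ^ (-α) ≤ a ^ (-α) :=
  (Real.rpow_le_rpow_iff_of_neg (lt_of_lt_of_le ha hab) ha (by linarith)).2 hab

/-- In the region `E < E*`, `|A| ≥ A*`, the mutual distance never equals `rstar`. -/
lemma no_cross (hα : 2 < α) (hω : 0 < ω) (hm : ∀ i, 0 < m i) (hm1 : m 0 + m 1 = 1)
    {q v : Fin 2 → E2} (hq : m 0 • q 0 + m 1 • q 1 = 0) (hv : m 0 • v 0 + m 1 • v 1 = 0)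
    (hne : q 0 ≠ q 1) (hE : energy α m q v < Estar α m ω)
    (hA : Astar α m ω ≤ |angMom m q v|) : ‖q 0 - q 1‖ ≠ rstar α ω := by
  intro hr
  have hα0 := alpha_pos hα
  have hρ := rstar_pos (ω := ω) hα hω
  have hμ := mu_pos hm
  set ρ := rstar α ω with hρdef
  have hrpos : (0:ℝ) < ρ ^ (-α) := Real.rpow_pos_of_pos hρ _
  have hsplit : ρ ^ (2 - α) = ρ ^ (2:ℕ) * ρ ^ (-α) := by
    rw [← Real.rpow_natCast ρ 2, ← Real.rpow_add hρ]; ring_nf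
  have hAc : |angMom m q v| = (m 0 * m 1) * |cross2 (q 0 - q 1) (v 0 - v 1)| := by
    rw [angMom_com hm1 hq hv, abs_mul, abs_of_pos hμ]
  have hcle := abs_cross2_le (q 0 - q 1) (v 0 - v 1)
  have hA' : Astar α m ω ≤ m 0 * m 1 * (ρ * ‖v 0 - v 1‖) := by
    rw [hAc] at hA
    rw [hr] at hcle
    exact le_trans hA (mul_le_mul_of_nonneg_left hcle hμ.le)
  have hAsq := Astar_sq hα hω hm
  have hApos : 0 < Astar α m ω := by rw [Astar]; have := hm 0; have := hm 1; positivity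
  have hw' : α * ρ ^ (-α) ≤ ‖v 0 - v 1‖ ^ 2 := by
    have h2 : Astar α m ω ^ 2 ≤ (m 0 * m 1) ^ 2 * (ρ ^ 2 * ‖v 0 - v 1‖ ^ 2) := by
      have := pow_le_pow_left₀ hApos.le hA' 2
      calc Astar α m ω ^ 2 ≤ (m 0 * m 1 * (ρ * ‖v 0 - v 1‖)) ^ 2 := this
        _ = (m 0 * m 1) ^ 2 * (ρ ^ 2 * ‖v 0 - v 1‖ ^ 2) := by ring
    rw [hAsq, ← hρdef, hsplit] at h2
    have hμ2 : (0:ℝ) < (m 0 * m 1) ^ 2 * ρ ^ 2 := by positivity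
    nlinarith [h2]
  have hker := kinetic_com hm1 hv
  have hpot : pot α m q = -(m 0 * m 1 * ρ ^ (-α)) := by
    rw [pot_eq hm hne, hr]
  have hEeq := Estar_eq hα hω hm
  rw [energy, hker, hpot, hEeq] at hE
  rw [← hρdef] at hE
  have hrw : m 0 * m 1 * (1 / 2 - 1 / α) * α * ρ ^ (-α)
      = m 0 * m 1 * (α / 2 - 1) * ρ ^ (-α) := by
    have h : (1 / 2 - 1 / α) * α = α / 2 - 1 := by field_simp
    linear_combination (m 0 * m 1 * ρ ^ (-α)) * h
  rw [hrw] at hE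
  nlinarith [mul_le_mul_of_nonneg_left hw' hμ.le, hrpos]

end Algebra
/-! ### Dynamics: conservation laws -/

section Dynamics

variable {α ω : ℝ} {m : Fin 2 → ℝ} {σ : EReal} {x v : ℝ → Fin 2 → E2}

lemma accel_zero (q : Fin 2 → E2) :
    accel α m q 0 = (-(α * m 1 / ‖q 0 - q 1‖ ^ (α + 2))) • (q 0 - q 1) := rfl

lemma accel_one (q : Fin 2 → E2) :
    accel α m q 1 = (α * m 0 / ‖q 0 - q 1‖ ^ (α + 2)) • (q 0 - q 1) := by
  show (-(α * m 0 / ‖q 1 - q 0‖ ^ (α + 2))) • (q 1 - q 0) = _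
  rw [norm_sub_rev, show q 1 - q 0 = -(q 0 - q 1) from by abel, smul_neg, ← neg_smul, neg_neg]

lemma Dom_subset {t : ℝ} (ht : t ∈ Dom σ) {s : ℝ} (h0 : 0 ≤ s) (hst : s ≤ t) : s ∈ Dom σ :=
  ⟨h0, lt_of_le_of_lt (EReal.coe_le_coe_iff.2 hst) ht.2⟩

lemma zero_mem_Dom (hσ : 0 < σ) : (0:ℝ) ∈ Dom σ :=
  ⟨le_refl 0, by exact_mod_cast hσ⟩

lemma sol_gap_pos (hsol : IsSolnOn α m x v (Dom σ)) {t : ℝ} (ht : t ∈ Dom σ) :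
    0 < ‖x t 0 - x t 1‖ := by
  rw [norm_pos_iff, sub_ne_zero]; exact (hsol t ht).1

lemma hasDerivAt_norm_sq {f : ℝ → E2} {f' : E2} {t : ℝ} (hf : HasDerivAt f f' t) :
    HasDerivAt (fun τ => ‖f τ‖ ^ 2) (2 * (inner ℝ (f t) f' : ℝ)) t := by
  have h2 : (fun τ => ‖f τ‖ ^ 2) = fun τ => (inner ℝ (f τ) (f τ) : ℝ) := by
    funext τ; rw [real_inner_self_eq_norm_sq]
  rw [h2]
  refine (HasDerivAt.inner ℝ hf hf).congr_deriv ?_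
  rw [real_inner_comm (f t) f']
  ring

lemma sq_rpow_half {r e : ℝ} (hr : 0 ≤ r) : ((r ^ 2 : ℝ)) ^ (-(e / 2)) = r ^ (-e) := by
  rw [← Real.rpow_natCast r 2, ← Real.rpow_mul hr]
  congr 1
  push_cast
  ring

lemma rpow_sq_exp {r e : ℝ} (hr : 0 < r) :
    ((r ^ 2 : ℝ)) ^ (-(e / 2) - 1) = (r ^ (e + 2))⁻¹ := by
  rw [← Real.rpow_natCast r 2, ← Real.rpow_mul hr.le, ← Real.rpow_neg hr.le]
  congr 1
  push_cast
  ring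

lemma hasDerivAt_pot_aux {w : ℝ → E2} {w' : E2} {t e : ℝ} (hw : HasDerivAt w w' t)
    (hne : w t ≠ 0) :
    HasDerivAt (fun τ => (‖w τ‖ ^ 2 : ℝ) ^ (-(e / 2)))
      ((-(e / 2)) * (‖w t‖ ^ 2 : ℝ) ^ (-(e / 2) - 1) * (2 * (inner ℝ (w t) w' : ℝ))) t := by
  have h1 := hasDerivAt_norm_sq hw
  have hpos : (0:ℝ) < ‖w t‖ ^ 2 := by
    have : 0 < ‖w t‖ := norm_pos_iff.2 hne
    positivity
  have h2 := Real.hasDerivAt_rpow_const (x := ‖w t‖ ^ 2) (p := -(e / 2)) (Or.inl hpos.ne')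
  exact h2.comp t h1

lemma cross2_self (a : E2) : cross2 a a = 0 := by simp [cross2]; ring

lemma cross2_sub_left (a b c : E2) : cross2 (a - b) c = cross2 a c - cross2 b c := by
  simp only [cross2, sub_coord]; ring

lemma cross2_smul_right (c : ℝ) (a b : E2) : cross2 a (c • b) = c * cross2 a b := by
  simp only [cross2, smul_coord]; ring

lemma hasDerivAt_coord {f : ℝ → E2} {f' : E2} {t : ℝ} (hf : HasDerivAt f f' t) (i : Fin 2) :
    HasDerivAt (fun τ => f τ i) (f' i) t := by
  have h := (EuclideanSpace.proj (𝕜 := ℝ) i).hasFDerivAt.comp_hasDerivAt t hf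
  exact h

lemma hasDerivAt_cross2 {f g : ℝ → E2} {f' g' : E2} {t : ℝ}
    (hf : HasDerivAt f f' t) (hg : HasDerivAt g g' t) :
    HasDerivAt (fun τ => cross2 (f τ) (g τ)) (cross2 f' (g t) + cross2 (f t) g') t := by
  have h := ((hasDerivAt_coord hf 0).mul (hasDerivAt_coord hg 1)).sub
    ((hasDerivAt_coord hf 1).mul (hasDerivAt_coord hg 0))
  refine h.congr_deriv ?_
  simp only [cross2]
  ring

/-- Derivative of the (smooth version of the) energy along a solution is zero. -/
lemma energy_hasDerivAt (hsol : IsSolnOn α m x v (Dom σ)) {t : ℝ} (ht : t ∈ Dom σ) :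
    HasDerivAt (fun τ => (1/2 : ℝ) * (m 0 * ‖v τ 0‖ ^ 2 + m 1 * ‖v τ 1‖ ^ 2)
      - m 0 * m 1 * ((‖x τ 0 - x τ 1‖ ^ 2 : ℝ) ^ (-(α / 2)))) 0 t := by
  have hx0 := ((hsol t ht).2 0).1
  have hx1 := ((hsol t ht).2 1).1
  have hv0 := ((hsol t ht).2 0).2
  have hv1 := ((hsol t ht).2 1).2
  have hw : HasDerivAt (fun τ => x τ 0 - x τ 1) (v t 0 - v t 1) t := hx0.sub hx1
  have hne : x t 0 - x t 1 ≠ 0 := sub_ne_zero.2 (hsol t ht).1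
  have hr : 0 < ‖x t 0 - x t 1‖ := norm_pos_iff.2 hne
  have h0 := hasDerivAt_norm_sq hv0
  have h1 := hasDerivAt_norm_sq hv1
  have hP := hasDerivAt_pot_aux (e := α) hw hne
  have hD := (((h0.const_mul (m 0)).add (h1.const_mul (m 1))).const_mul ((1:ℝ)/2)).sub
    (hP.const_mul (m 0 * m 1))
  refine hD.congr_deriv ?_
  rw [accel_zero, accel_one, real_inner_smul_right, real_inner_smul_right,
    rpow_sq_exp hr, real_inner_comm (v t 0 - v t 1) (x t 0 - x t 1),
    inner_sub_left, div_eq_mul_inv, div_eq_mul_inv]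
  ring

/-- Derivative of the angular momentum along a solution is zero. -/
lemma angMom_hasDerivAt (hsol : IsSolnOn α m x v (Dom σ)) {t : ℝ} (ht : t ∈ Dom σ) :
    HasDerivAt (fun τ => m 0 * cross2 (x τ 0) (v τ 0) + m 1 * cross2 (x τ 1) (v τ 1)) 0 t := by
  have hx0 := ((hsol t ht).2 0).1
  have hx1 := ((hsol t ht).2 1).1
  have hv0 := ((hsol t ht).2 0).2
  have hv1 := ((hsol t ht).2 1).2
  have hne : x t 0 - x t 1 ≠ 0 := sub_ne_zero.2 (hsol t ht).1
  have hr : 0 < ‖x t 0 - x t 1‖ := norm_pos_iff.2 hne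
  have hD := ((hasDerivAt_cross2 hx0 hv0).const_mul (m 0)).add
    ((hasDerivAt_cross2 hx1 hv1).const_mul (m 1))
  refine hD.congr_deriv ?_
  rw [accel_zero, accel_one, cross2_smul_right, cross2_smul_right, cross2_self, cross2_self]
  have hc : cross2 (x t 0) (x t 0 - x t 1) - cross2 (x t 1) (x t 0 - x t 1) = 0 := by
    rw [← cross2_sub_left]; exact cross2_self _
  rw [div_eq_mul_inv, div_eq_mul_inv]
  linear_combination (-(α * m 1 * m 0 * (‖x t 0 - x t 1‖ ^ (α + 2))⁻¹)) * hc

/-- Conservation of energy. -/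
lemma energy_const (hm : ∀ i, 0 < m i) (hσ : 0 < σ) (hsol : IsSolnOn α m x v (Dom σ))
    {t : ℝ} (ht : t ∈ Dom σ) :
    energy α m (x t) (v t) = energy α m (x 0) (v 0) := by
  set F : ℝ → ℝ := fun τ => (1/2 : ℝ) * (m 0 * ‖v τ 0‖ ^ 2 + m 1 * ‖v τ 1‖ ^ 2)
      - m 0 * m 1 * ((‖x τ 0 - x τ 1‖ ^ 2 : ℝ) ^ (-(α / 2))) with hF
  have hsub : ∀ s ∈ Icc (0:ℝ) t, s ∈ Dom σ := fun s hs => Dom_subset ht hs.1 hs.2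
  have hcont : ContinuousOn F (Icc 0 t) := fun s hs =>
    (energy_hasDerivAt hsol (hsub s hs)).continuousAt.continuousWithinAt
  have hderiv : ∀ s ∈ Ico (0:ℝ) t, HasDerivWithinAt F 0 (Ici s) s := fun s hs =>
    (energy_hasDerivAt hsol (hsub s ⟨hs.1, hs.2.le⟩)).hasDerivWithinAt
  have hconst := constant_of_has_deriv_right_zero hcont hderiv t ⟨ht.1, le_refl t⟩
  have hform : ∀ s ∈ Dom σ, F s = energy α m (x s) (v s) := by
    intro s hs
    have hr : 0 < ‖x s 0 - x s 1‖ := sol_gap_pos hsol hs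
    simp only [hF]
    rw [energy, Fin.sum_univ_two, pot_eq hm (hsol s hs).1, sq_rpow_half hr.le,
      Real.rpow_neg hr.le, div_eq_mul_inv]
    ring
  rw [← hform t ht, ← hform 0 (zero_mem_Dom hσ), hconst]

/-- Conservation of angular momentum. -/
lemma angMom_const (hσ : 0 < σ) (hsol : IsSolnOn α m x v (Dom σ))
    {t : ℝ} (ht : t ∈ Dom σ) :
    angMom m (x t) (v t) = angMom m (x 0) (v 0) := by
  set F : ℝ → ℝ := fun τ => m 0 * cross2 (x τ 0) (v τ 0) + m 1 * cross2 (x τ 1) (v τ 1) with hF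
  have hsub : ∀ s ∈ Icc (0:ℝ) t, s ∈ Dom σ := fun s hs => Dom_subset ht hs.1 hs.2
  have hcont : ContinuousOn F (Icc 0 t) := fun s hs =>
    (angMom_hasDerivAt hsol (hsub s hs)).continuousAt.continuousWithinAt
  have hderiv : ∀ s ∈ Ico (0:ℝ) t, HasDerivWithinAt F 0 (Ici s) s := fun s hs =>
    (angMom_hasDerivAt hsol (hsub s ⟨hs.1, hs.2.le⟩)).hasDerivWithinAt
  have hconst := constant_of_has_deriv_right_zero hcont hderiv t ⟨ht.1, le_refl t⟩
  have hform : ∀ s, F s = angMom m (x s) (v s) := by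
    intro s
    simp only [hF]
    rw [angMom, Fin.sum_univ_two]
  rw [← hform t, ← hform 0, hconst]

/-- The center of mass of velocities vanishes. -/
lemma com_vel (hsol : IsSolnOn α m x v (Dom σ))
    (hcom : ∀ t ∈ Dom σ, m 0 • x t 0 + m 1 • x t 1 = 0)
    {t : ℝ} (ht : t ∈ Dom σ) : m 0 • v t 0 + m 1 • v t 1 = 0 := by
  have hx0 := ((hsol t ht).2 0).1
  have hx1 := ((hsol t ht).2 1).1
  have hD : HasDerivAt (fun τ => m 0 • x τ 0 + m 1 • x τ 1)
      (m 0 • v t 0 + m 1 • v t 1) t := (hx0.const_smul (m 0)).add (hx1.const_smul (m 1))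
  -- find η > 0 with Ico t (t + η) ⊆ Dom σ
  obtain ⟨η, hη, hsub⟩ : ∃ η > (0:ℝ), Ico t (t + η) ⊆ Dom σ := by
    induction σ with
    | bot => exact absurd ht.2 (by simp)
    | coe c =>
        have htc : t < c := by exact_mod_cast ht.2
        refine ⟨(c - t) / 2, by linarith, fun s hs => ⟨le_trans ht.1 hs.1, ?_⟩⟩
        have hs2 : s < c := by
          have := hs.2
          linarith
        exact_mod_cast hs2
    | top => exact ⟨1, one_pos, fun s hs => ⟨le_trans ht.1 hs.1, EReal.coe_lt_top s⟩⟩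
  have hmem : Ico t (t + η) ∈ 𝓝[Ici t] t :=
    Ico_mem_nhdsGE (by linarith)
  have hev : (fun τ => m 0 • x τ 0 + m 1 • x τ 1) =ᶠ[𝓝[Ici t] t] (fun _ => (0:E2)) :=
    Filter.eventuallyEq_of_mem hmem (fun s hs => hcom s (hsub hs))
  have h0 : HasDerivWithinAt (fun _ : ℝ => (0:E2)) (m 0 • v t 0 + m 1 • v t 1) (Ici t) t :=
    hD.hasDerivWithinAt.congr_of_eventuallyEq hev.symm (by rw [hcom t ht])
  have h0' : HasDerivWithinAt (fun _ : ℝ => (0:E2)) 0 (Ici t) t :=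
    (hasDerivAt_const t (0:E2)).hasDerivWithinAt
  exact UniqueDiffWithinAt.eq_deriv _ (uniqueDiffOn_Ici t t Set.self_mem_Ici) h0 h0'

/-- Master invariance lemma. -/
lemma invariance (hα : 2 < α) (hω : 0 < ω) (hm : ∀ i, 0 < m i) (hm1 : m 0 + m 1 = 1)
    (hσ : 0 < σ) (hsol : IsSolnOn α m x v (Dom σ))
    (hcom : ∀ t ∈ Dom σ, m 0 • x t 0 + m 1 • x t 1 = 0)
    (hE0 : energy α m (x 0) (v 0) < Estar α m ω)
    (hA0 : Astar α m ω ≤ |angMom m (x 0) (v 0)|) :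
    (∀ t ∈ Dom σ, energy α m (x t) (v t) < Estar α m ω ∧
      Astar α m ω ≤ |angMom m (x t) (v t)| ∧ ‖x t 0 - x t 1‖ ≠ rstar α ω) ∧
    ((rstar α ω < ‖x 0 0 - x 0 1‖ → ∀ t ∈ Dom σ, rstar α ω < ‖x t 0 - x t 1‖) ∧
     (‖x 0 0 - x 0 1‖ < rstar α ω → ∀ t ∈ Dom σ, ‖x t 0 - x t 1‖ < rstar α ω)) := by
  have base : ∀ t ∈ Dom σ, energy α m (x t) (v t) < Estar α m ω ∧
      Astar α m ω ≤ |angMom m (x t) (v t)| ∧ ‖x t 0 - x t 1‖ ≠ rstar α ω := by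
    intro t ht
    refine ⟨by rw [energy_const hm hσ hsol ht]; exact hE0,
      by rw [angMom_const hσ hsol ht]; exact hA0, ?_⟩
    exact no_cross hα hω hm hm1 (hcom t ht) (com_vel hsol hcom ht) (hsol t ht).1
      (by rw [energy_const hm hσ hsol ht]; exact hE0)
      (by rw [angMom_const hσ hsol ht]; exact hA0)
  have hcontOn : ∀ t ∈ Dom σ, ContinuousOn (fun s => ‖x s 0 - x s 1‖) (Icc 0 t) := by
    intro t ht s hs
    have h1 := ((hsol s (Dom_subset ht hs.1 hs.2)).2 0).1
    have h2 := ((hsol s (Dom_subset ht hs.1 hs.2)).2 1).1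
    exact ((h1.sub h2)).continuousAt.norm.continuousWithinAt
  refine ⟨base, fun h0 t ht => ?_, fun h0 t ht => ?_⟩
  · rcases lt_or_gt_of_ne ((base t ht).2.2) with hlt | hgt
    · exfalso
      have hmem : rstar α ω ∈ Icc (‖x t 0 - x t 1‖) (‖x 0 0 - x 0 1‖) := ⟨hlt.le, h0.le⟩
      obtain ⟨s, hs, hval⟩ := intermediate_value_Icc' ht.1 (hcontOn t ht) hmem
      exact (base s (Dom_subset ht hs.1 hs.2)).2.2 hval
    · exact hgt
  · rcases lt_or_gt_of_ne ((base t ht).2.2) with hlt | hgt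
    · exact hlt
    · exfalso
      have hmem : rstar α ω ∈ Icc (‖x 0 0 - x 0 1‖) (‖x t 0 - x t 1‖) := ⟨h0.le, hgt.le⟩
      obtain ⟨s, hs, hval⟩ := intermediate_value_Icc ht.1 (hcontOn t ht) hmem
      exact (base s (Dom_subset ht hs.1 hs.2)).2.2 hval

/-- Invariance of `K⁺`. -/
lemma Kplus_invariant (hα : 2 < α) (hω : 0 < ω) (hm : ∀ i, 0 < m i) (hm1 : m 0 + m 1 = 1)
    (hσ : 0 < σ) (hsol : IsSolnOn α m x v (Dom σ))
    (hcom : ∀ t ∈ Dom σ, m 0 • x t 0 + m 1 • x t 1 = 0)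
    (hinit : memKplus α m ω (x 0) (v 0)) :
    ∀ t ∈ Dom σ, memKplus α m ω (x t) (v t) ∧ rstar α ω < ‖x t 0 - x t 1‖ := by
  obtain ⟨hE0, hA0, hK0⟩ := hinit
  obtain ⟨base, hside, -⟩ := invariance hα hω hm hm1 hσ hsol hcom hE0 hA0
  have h00 := zero_mem_Dom hσ
  have hr0 : rstar α ω < ‖x 0 0 - x 0 1‖ := by
    rcases lt_or_gt_of_ne ((base 0 h00).2.2) with hlt | hgt
    · exact absurd ((Kfun_nonneg_iff hα hω hm hm1 (hcom 0 h00) (hsol 0 h00).1).1 hK0)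
        (not_le.2 hlt)
    · exact hgt
  intro t ht
  have hrt := hside hr0 t ht
  exact ⟨⟨(base t ht).1, (base t ht).2.1,
    (Kfun_nonneg_iff hα hω hm hm1 (hcom t ht) (hsol t ht).1).2 hrt.le⟩, hrt⟩

/-- Invariance of `K⁻`. -/
lemma Kminus_invariant (hα : 2 < α) (hω : 0 < ω) (hm : ∀ i, 0 < m i) (hm1 : m 0 + m 1 = 1)
    (hσ : 0 < σ) (hsol : IsSolnOn α m x v (Dom σ))
    (hcom : ∀ t ∈ Dom σ, m 0 • x t 0 + m 1 • x t 1 = 0)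
    (hinit : memKminus α m ω (x 0) (v 0)) :
    ∀ t ∈ Dom σ, memKminus α m ω (x t) (v t) ∧ ‖x t 0 - x t 1‖ < rstar α ω := by
  obtain ⟨hE0, hA0, hK0⟩ := hinit
  obtain ⟨base, -, hside⟩ := invariance hα hω hm hm1 hσ hsol hcom hE0 hA0
  have h00 := zero_mem_Dom hσ
  have hr0 : ‖x 0 0 - x 0 1‖ < rstar α ω :=
    (Kfun_neg_iff hα hω hm hm1 (hcom 0 h00) (hsol 0 h00).1).1 hK0
  intro t ht
  have hrt := hside hr0 t ht
  exact ⟨⟨(base t ht).1, (base t ht).2.1,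
    (Kfun_neg_iff hα hω hm hm1 (hcom t ht) (hsol t ht).1).2 hrt⟩, hrt⟩

/-- Concavity contradiction: a nonnegative function on `[0,∞)` whose second derivative
is `≤ -c < 0` cannot exist. -/
lemma hasDerivAt_lin (a s : ℝ) : HasDerivAt (fun u : ℝ => a * u) a s := by
  simpa using (hasDerivAt_id s).const_mul a

lemma hasDerivAt_quad (c s : ℝ) : HasDerivAt (fun u : ℝ => c * u ^ 2 / 2) (c * s) s := by
  have h := ((hasDerivAt_pow 2 s).const_mul c).div_const 2
  refine h.congr_deriv ?_
  push_cast
  ring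

/-- Concavity contradiction: a nonnegative function on `[0,∞)` whose second derivative
is `≤ -c < 0` cannot exist. -/
lemma concave_contradiction {I J : ℝ → ℝ} {c : ℝ} (hc : 0 < c)
    (hI : ∀ t ∈ Ici (0:ℝ), HasDerivAt I (J t) t)
    (hJ : ∀ t ∈ Ici (0:ℝ), ∃ D, HasDerivAt J D t ∧ D ≤ -c)
    (hInonneg : ∀ t ∈ Ici (0:ℝ), 0 ≤ I t) : False := by
  -- first integration: J s + c s is antitone on [0, ∞)
  have hg : AntitoneOn (fun s => J s + c * s) (Ici (0:ℝ)) := by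
    apply antitoneOn_of_deriv_nonpos (convex_Ici 0)
    · intro s hs
      obtain ⟨D, hD, -⟩ := hJ s hs
      exact (hD.add (hasDerivAt_lin c s)).continuousAt.continuousWithinAt
    · intro s hs
      rw [interior_Ici] at hs
      obtain ⟨D, hD, -⟩ := hJ s (mem_Ici.2 (le_of_lt hs))
      exact (hD.add (hasDerivAt_lin c s)).differentiableAt.differentiableWithinAt
    · intro s hs
      rw [interior_Ici] at hs
      obtain ⟨D, hD, hDle⟩ := hJ s (mem_Ici.2 (le_of_lt hs))
      rw [show deriv (fun s => J s + c * s) s = D + c from (hD.add (hasDerivAt_lin c s)).deriv]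
      linarith
  have hJle : ∀ t ∈ Ici (0:ℝ), J t + c * t ≤ J 0 := by
    intro t ht
    have := hg self_mem_Ici ht ht
    simpa using this
  -- second integration
  have hG : AntitoneOn (fun s => I s + c * s ^ 2 / 2 - J 0 * s) (Ici (0:ℝ)) := by
    apply antitoneOn_of_deriv_nonpos (convex_Ici 0)
    · intro s hs
      exact (((hI s hs).add (hasDerivAt_quad c s)).sub
        (hasDerivAt_lin (J 0) s)).continuousAt.continuousWithinAt
    · intro s hs
      rw [interior_Ici] at hs
      exact (((hI s (mem_Ici.2 (le_of_lt hs))).add (hasDerivAt_quad c s)).sub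
        (hasDerivAt_lin (J 0) s)).differentiableAt.differentiableWithinAt
    · intro s hs
      rw [interior_Ici] at hs
      rw [show deriv (fun s => I s + c * s ^ 2 / 2 - J 0 * s) s = J s + c * s - J 0 from
        (((hI s (mem_Ici.2 (le_of_lt hs))).add (hasDerivAt_quad c s)).sub
        (hasDerivAt_lin (J 0) s)).deriv]
      have := hJle s (mem_Ici.2 (le_of_lt hs))
      linarith
  -- conclusion
  set T : ℝ := max 1 ((2 / c) * (I 0 + |J 0| + 1)) with hT
  have hT1 : (1:ℝ) ≤ T := le_max_left _ _
  have hT0 : (0:ℝ) ≤ T := by linarith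
  have hT2 : (2 / c) * (I 0 + |J 0| + 1) ≤ T := le_max_right _ _
  have hct : I 0 + |J 0| + 1 ≤ c * T / 2 := by
    have h := mul_le_mul_of_nonneg_left hT2 (le_of_lt hc)
    have hcne : c ≠ 0 := ne_of_gt hc
    calc I 0 + |J 0| + 1 = c * ((2 / c) * (I 0 + |J 0| + 1)) / 2 := by
          field_simp
        _ ≤ c * T / 2 := by linarith [h]
  have hGle := hG self_mem_Ici (show T ∈ Ici (0:ℝ) from hT0) hT0
  have hGle' : I T + c * T ^ 2 / 2 - J 0 * T ≤ I 0 := by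
    have h0 : I 0 + c * (0:ℝ) ^ 2 / 2 - J 0 * 0 = I 0 := by ring
    calc I T + c * T ^ 2 / 2 - J 0 * T ≤ I 0 + c * (0:ℝ) ^ 2 / 2 - J 0 * 0 := hGle
      _ = I 0 := h0
  have hIT := hInonneg T hT0
  have h1 : (I 0 + |J 0| + 1) * T ≤ (c * T / 2) * T :=
    mul_le_mul_of_nonneg_right hct hT0
  have h2 : J 0 ≤ |J 0| := le_abs_self _
  have h3 : I 0 ≤ I 0 * T := le_mul_of_one_le_right (hInonneg 0 self_mem_Ici) hT1
  nlinarith [h1, h2, h3, hIT, hGle', abs_nonneg (J 0), mul_le_mul_of_nonneg_right h2 hT0]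

lemma inner_accel_sum (hα : 2 < α) (hsol : IsSolnOn α m x v (Dom σ)) {t : ℝ} (ht : t ∈ Dom σ) :
    m 0 * (inner ℝ (x t 0) (accel α m (x t) 0) : ℝ)
      + m 1 * (inner ℝ (x t 1) (accel α m (x t) 1) : ℝ) = α * pot α m (x t) := by
  have hne : x t 0 - x t 1 ≠ 0 := sub_ne_zero.2 (hsol t ht).1
  have hr : 0 < ‖x t 0 - x t 1‖ := norm_pos_iff.2 hne
  set r := ‖x t 0 - x t 1‖ with hrdef
  have hsplit : r ^ (α + 2) = r ^ α * r ^ (2:ℕ) := by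
    rw [Real.rpow_add hr]
    congr 1
    rw [← Real.rpow_natCast r 2]
    norm_num
  have hWne : r ^ (2:ℕ) ≠ 0 := by positivity
  have hAinvW : (r ^ (α + 2))⁻¹ * r ^ (2:ℕ) = (r ^ α)⁻¹ := by
    rw [hsplit, mul_inv, mul_assoc, inv_mul_cancel₀ hWne, mul_one]
  have hiw : (inner ℝ (x t 0) (x t 0 - x t 1) : ℝ) - (inner ℝ (x t 1) (x t 0 - x t 1) : ℝ)
      = r ^ (2:ℕ) := by
    rw [← inner_sub_left, real_inner_self_eq_norm_sq]
  rw [accel_zero, accel_one, real_inner_smul_right, real_inner_smul_right, pot,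
    div_eq_mul_inv, div_eq_mul_inv, div_eq_mul_inv]
  linear_combination (-(α * (m 0 * m 1) * (r ^ (α + 2))⁻¹)) * hiw
    + (-(α * (m 0 * m 1))) * hAinvW

/-- Solutions in `K⁻` cannot be global. -/
lemma Kminus_singular (hα : 2 < α) (hω : 0 < ω) (hm : ∀ i, 0 < m i) (hm1 : m 0 + m 1 = 1)
    (hσ : 0 < σ) (hsol : IsSolnOn α m x v (Dom σ))
    (hcom : ∀ t ∈ Dom σ, m 0 • x t 0 + m 1 • x t 1 = 0)
    (hinit : memKminus α m ω (x 0) (v 0)) : σ < ⊤ := by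
  by_contra htop
  have hσtop : σ = ⊤ := top_le_iff.1 (not_lt.1 htop)
  have hDom : ∀ t : ℝ, 0 ≤ t → t ∈ Dom σ := fun t ht =>
    ⟨ht, hσtop ▸ EReal.coe_lt_top t⟩
  have hinv := Kminus_invariant hα hω hm hm1 hσ hsol hcom hinit
  have hα0 := alpha_pos hα
  have hρ := rstar_pos (ω := ω) hα hω
  have hμ := mu_pos hm
  set ρ := rstar α ω with hρdef
  set E0 := energy α m (x 0) (v 0) with hE0def
  have hE0lt : E0 < Estar α m ω := hinit.1
  have hc : (0:ℝ) < 4 * (Estar α m ω - E0) := by linarith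
  apply concave_contradiction (c := 4 * (Estar α m ω - E0))
    (I := fun τ => m 0 * ‖x τ 0‖ ^ 2 + m 1 * ‖x τ 1‖ ^ 2)
    (J := fun τ => 2 * (m 0 * (inner ℝ (x τ 0) (v τ 0) : ℝ)
      + m 1 * (inner ℝ (x τ 1) (v τ 1) : ℝ))) hc
  · intro t ht
    have hmem := hDom t ht
    have hx0 := ((hsol t hmem).2 0).1
    have hx1 := ((hsol t hmem).2 1).1
    have h := ((hasDerivAt_norm_sq hx0).const_mul (m 0)).add
      ((hasDerivAt_norm_sq hx1).const_mul (m 1))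
    refine h.congr_deriv ?_
    ring
  · intro t ht
    have hmem := hDom t ht
    have hx0 := ((hsol t hmem).2 0).1
    have hx1 := ((hsol t hmem).2 1).1
    have hv0 := ((hsol t hmem).2 0).2
    have hv1 := ((hsol t hmem).2 1).2
    have hJd := (((HasDerivAt.inner ℝ hx0 hv0).const_mul (m 0)).add
      ((HasDerivAt.inner ℝ hx1 hv1).const_mul (m 1))).const_mul 2
    refine ⟨_, hJd, ?_⟩
    have hxa := inner_accel_sum hα hsol hmem
    have hkin : m 0 * ‖v t 0‖ ^ 2 + m 1 * ‖v t 1‖ ^ 2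
        = 2 * (E0 - pot α m (x t)) := by
      have hE := energy_const hm hσ hsol hmem
      rw [energy, Fin.sum_univ_two] at hE
      rw [← hE0def] at hE
      linarith
    have hrt : ‖x t 0 - x t 1‖ < ρ := (hinv t hmem).2
    have hU : pot α m (x t) ≤ -(m 0 * m 1 * ρ ^ (-α)) := by
      rw [pot_eq hm (hsol t hmem).1]
      have h := rpow_neg_anti hα0 (sol_gap_pos hsol hmem) hrt.le
      nlinarith [mul_le_mul_of_nonneg_left h hμ.le]
    have hmul : (2 * α - 4) * pot α m (x t) ≤ (2 * α - 4) * (-(m 0 * m 1 * ρ ^ (-α))) :=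
      mul_le_mul_of_nonneg_left hU (by linarith)
    have hfour := four_Estar hα hω hm
    rw [← hρdef] at hfour
    rw [real_inner_self_eq_norm_sq, real_inner_self_eq_norm_sq]
    linarith [hmul, hfour, hxa, hkin]
  · intro t ht
    exact add_nonneg (mul_nonneg (hm 0).le (sq_nonneg _)) (mul_nonneg (hm 1).le (sq_nonneg _))

/-! ### Extension machinery for global existence -/

/-- The phase space. -/
abbrev Phase := (Fin 2 → E2) × (Fin 2 → E2)

/-- The vector field of the two-body problem on phase space. -/
def flow (α : ℝ) (m : Fin 2 → ℝ) : Phase → Phase :=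
  fun y => (y.2, fun i => accel α m y.1 i)

lemma hasDerivAt_pair_fst {g : ℝ → Phase} {d : Phase} {t : ℝ} (hg : HasDerivAt g d t)
    (i : Fin 2) : HasDerivAt (fun s => (g s).1 i) (d.1 i) t := by
  have h1 : HasDerivAt (fun s => (g s).1) d.1 t := by
    have := (ContinuousLinearMap.fst ℝ (Fin 2 → E2) (Fin 2 → E2)).hasFDerivAt.comp_hasDerivAt t hg
    exact this
  have := (ContinuousLinearMap.proj (R := ℝ) (φ := fun _ : Fin 2 => E2) i).hasFDerivAt.comp_hasDerivAt t h1
  exact this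

lemma hasDerivAt_pair_snd {g : ℝ → Phase} {d : Phase} {t : ℝ} (hg : HasDerivAt g d t)
    (i : Fin 2) : HasDerivAt (fun s => (g s).2 i) (d.2 i) t := by
  have h1 : HasDerivAt (fun s => (g s).2) d.2 t := by
    have := (ContinuousLinearMap.snd ℝ (Fin 2 → E2) (Fin 2 → E2)).hasFDerivAt.comp_hasDerivAt t hg
    exact this
  have := (ContinuousLinearMap.proj (R := ℝ) (φ := fun _ : Fin 2 => E2) i).hasFDerivAt.comp_hasDerivAt t h1
  exact this

/-- The vector field is `C¹` at non-collision points. -/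
lemma flow_contDiffAt (hα : 2 < α) {y : Phase} (hy : y.1 0 ≠ y.1 1) :
    ContDiffAt ℝ 1 (flow α m) y := by
  apply ContDiffAt.prodMk
  · exact contDiff_snd.contDiffAt
  · rw [contDiffAt_pi]
    intro i
    have hgap : ∀ j : Fin 2, ContDiff ℝ 1 (fun z : Phase => z.1 j - z.1 (other j)) := by
      intro j
      apply ContDiff.sub
      · exact ((ContinuousLinearMap.proj (R := ℝ) (φ := fun _ : Fin 2 => E2) j).contDiff).comp contDiff_fst
      · exact ((ContinuousLinearMap.proj (R := ℝ) (φ := fun _ : Fin 2 => E2) (other j)).contDiff).comp contDiff_fst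
    have hne : y.1 i - y.1 (other i) ≠ 0 := by
      fin_cases i
      · simpa [other, sub_ne_zero] using hy
      · simp only [other]
        norm_num
        intro h
        exact hy (sub_eq_zero.1 h).symm
    have hnorm : ContDiffAt ℝ 1 (fun z : Phase => ‖z.1 i - z.1 (other i)‖) y :=
      (contDiffAt_norm ℝ hne).comp y (hgap i).contDiffAt
    have hnormpos : (0:ℝ) < ‖y.1 i - y.1 (other i)‖ := norm_pos_iff.2 hne
    have hrpow : ContDiffAt ℝ 1 (fun z : Phase => ‖z.1 i - z.1 (other i)‖ ^ (α + 2)) y :=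
      hnorm.rpow_const_of_ne hnormpos.ne'
    have hrpowne : ‖y.1 i - y.1 (other i)‖ ^ (α + 2) ≠ 0 :=
      (Real.rpow_pos_of_pos hnormpos _).ne'
    have hcoef : ContDiffAt ℝ 1
        (fun z : Phase => -(α * m (other i) / ‖z.1 i - z.1 (other i)‖ ^ (α + 2))) y :=
      (contDiffAt_const.div hrpow hrpowne).neg
    exact hcoef.smul (hgap i).contDiffAt

/-- A function Lipschitz on `[0,T)` has a limit at `T`. -/
lemma lip_limit {f : ℝ → E2} {L T : ℝ} (hT : 0 < T)
    (hf : ∀ s ∈ Ico (0:ℝ) T, ∀ t ∈ Ico (0:ℝ) T, ‖f t - f s‖ ≤ L * |t - s|) :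
    ∃ a : E2, Tendsto f (𝓝[Ico 0 T] T) (𝓝 a) := by
  have hne : (𝓝[Ico (0:ℝ) T] T).NeBot := by
    rw [← mem_closure_iff_nhdsWithin_neBot, closure_Ico hT.ne]
    exact right_mem_Icc.2 hT.le
  set L' := max L 1 with hL'def
  have hL' : (0:ℝ) < L' := lt_of_lt_of_le one_pos (le_max_right _ _)
  have hf' : ∀ s ∈ Ico (0:ℝ) T, ∀ t ∈ Ico (0:ℝ) T, ‖f t - f s‖ ≤ L' * |t - s| := by
    intro s hs t ht
    exact le_trans (hf s hs t ht) (mul_le_mul_of_nonneg_right (le_max_left _ _) (abs_nonneg _))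
  have hcauchy : Cauchy (map f (𝓝[Ico 0 T] T)) := by
    rw [cauchy_map_iff]
    refine ⟨hne, ?_⟩
    rw [Metric.uniformity_basis_dist.tendsto_right_iff]
    intro ε hε
    have hδ : (0:ℝ) < ε / (2 * L') := by positivity
    have hev : ∀ᶠ a in 𝓝[Ico (0:ℝ) T] T, a ∈ Ico (0:ℝ) T ∧ |a - T| < ε / (2 * L') :=
      eventually_mem_nhdsWithin.and
        (Filter.Eventually.filter_mono nhdsWithin_le_nhds (eventually_abs_sub_lt T hδ))
    have := Filter.Eventually.prod_mk hev hev
    filter_upwards [this] with p hp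
    obtain ⟨⟨hp1, hd1⟩, hp2, hd2⟩ := hp
    have hest := hf' p.2 hp2 p.1 hp1
    have : |p.1 - p.2| ≤ |p.1 - T| + |T - p.2| := by
      have := abs_sub_le p.1 T p.2
      linarith
    rw [dist_eq_norm]
    have h2 : |T - p.2| = |p.2 - T| := abs_sub_comm _ _
    calc ‖f p.1 - f p.2‖ ≤ L' * |p.1 - p.2| := hest
      _ ≤ L' * (|p.1 - T| + |p.2 - T|) := by
          apply mul_le_mul_of_nonneg_left _ hL'.le
          rw [← h2]; exact this
      _ < L' * (ε / (2 * L') + ε / (2 * L')) := by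
          apply mul_lt_mul_of_pos_left _ hL'
          linarith
      _ = ε := by field_simp; ring
  obtain ⟨a, ha⟩ := CompleteSpace.complete hcauchy
  exact ⟨a, ha⟩

lemma accel_norm_le (hα : 2 < α) (hm : ∀ i, 0 < m i) (hm1 : m 0 + m 1 = 1)
    {q : Fin 2 → E2} (hne : q 0 ≠ q 1) {ρ' : ℝ} (hρ' : 0 < ρ')
    (hge : ρ' ≤ ‖q 0 - q 1‖) (i : Fin 2) :
    ‖accel α m q i‖ ≤ α / ρ' ^ (α + 1) := by
  have hα0 := alpha_pos hα
  set r := ‖q 0 - q 1‖ with hrdef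
  have hr : 0 < r := lt_of_lt_of_le hρ' hge
  have hsplit : r ^ (α + 2) = r ^ (α + 1) * r := by
    rw [show α + 2 = (α + 1) + 1 by ring, Real.rpow_add hr, Real.rpow_one]
  have hQP : ρ' ^ (α + 1) ≤ r ^ (α + 1) := Real.rpow_le_rpow hρ'.le hge (by linarith)
  have hQ : 0 < ρ' ^ (α + 1) := Real.rpow_pos_of_pos hρ' _
  have hP : 0 < r ^ (α + 1) := Real.rpow_pos_of_pos hr _
  have key : ∀ c : ℝ, 0 ≤ c → c ≤ 1 → (α * c / r ^ (α + 2)) * r ≤ α / ρ' ^ (α + 1) := by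
    intro c hc0 hc1
    have h1 : α * c / r ^ (α + 2) * r = α * c / r ^ (α + 1) := by
      rw [hsplit]
      field_simp
    rw [h1]
    apply div_le_div₀ hα0.le (by nlinarith) hQ hQP
  have hm1le : m 1 ≤ 1 := by have := hm 0; linarith
  have hm0le : m 0 ≤ 1 := by have := hm 1; linarith
  have habs : ∀ c : ℝ, 0 ≤ c → |c / r ^ (α + 2)| = c / r ^ (α + 2) := fun c hc =>
    abs_of_nonneg (div_nonneg hc (Real.rpow_pos_of_pos hr _).le)
  fin_cases i
  · show ‖accel α m q 0‖ ≤ α / ρ' ^ (α + 1)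
    rw [accel_zero, norm_smul, Real.norm_eq_abs, abs_neg,
      habs _ (mul_nonneg hα0.le (hm 1).le)]
    exact key (m 1) (hm 1).le hm1le
  · show ‖accel α m q 1‖ ≤ α / ρ' ^ (α + 1)
    rw [accel_one, norm_smul, Real.norm_eq_abs, habs _ (mul_nonneg hα0.le (hm 0).le)]
    exact key (m 0) (hm 0).le hm0le

lemma fin2 (i : Fin 2) : i = 0 ∨ i = 1 := by omega

/-- Solutions in `K⁺` are global. -/
lemma Kplus_global (hα : 2 < α) (hω : 0 < ω) (hm : ∀ i, 0 < m i) (hm1 : m 0 + m 1 = 1)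
    (hmaxs : IsMaxSoln α m σ x v)
    (hcom : ∀ t ∈ Dom σ, m 0 • x t 0 + m 1 • x t 1 = 0)
    (hinit : memKplus α m ω (x 0) (v 0)) : σ = ⊤ := by
  obtain ⟨hσ, hsol, hmax'⟩ := hmaxs
  by_contra htop
  induction σ with
  | bot => exact absurd hσ (by simp)
  | top => exact htop rfl
  | coe T =>
  have hT : (0:ℝ) < T := by exact_mod_cast hσ
  have hDom : Dom ((T:ℝ):EReal) = Ico 0 T := by
    ext s; simp [Dom, Set.mem_Ico]
  have hmemT : ∀ {s : ℝ}, s ∈ Ico (0:ℝ) T → s ∈ Dom ((T:ℝ):EReal) := by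
    intro s hs; rw [hDom]; exact hs
  have hα0 := alpha_pos hα
  have hρ := rstar_pos (ω := ω) hα hω
  have hμ := mu_pos hm
  set ρ := rstar α ω with hρdef
  have hplus := Kplus_invariant hα hω hm hm1 hσ hsol hcom hinit
  -- kinetic energy bound
  set E0 := energy α m (x 0) (v 0) with hE0def
  set Cb := 2 * (E0 + m 0 * m 1 * ρ ^ (-α)) with hCbdef
  have hkin : ∀ s ∈ Ico (0:ℝ) T, m 0 * ‖v s 0‖ ^ 2 + m 1 * ‖v s 1‖ ^ 2 ≤ Cb := by
    intro s hs
    have hsD := hmemT hs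
    have hE := energy_const hm hσ hsol hsD
    rw [← hE0def] at hE
    rw [energy, Fin.sum_univ_two] at hE
    have hpotb : -(m 0 * m 1 * ρ ^ (-α)) ≤ pot α m (x s) := by
      rw [pot_eq hm (hsol _ hsD).1]
      have h := rpow_neg_anti hα0 hρ (le_of_lt (hplus s hsD).2)
      nlinarith [mul_le_mul_of_nonneg_left h hμ.le]
    linarith
  have hCb0 : 0 ≤ Cb := by
    have := hkin 0 ⟨le_rfl, hT⟩
    nlinarith [mul_nonneg (hm 0).le (sq_nonneg ‖v 0 0‖), mul_nonneg (hm 1).le (sq_nonneg ‖v 0 1‖)]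
  have hminpos : 0 < min (m 0) (m 1) := lt_min (hm 0) (hm 1)
  set Cv := Real.sqrt (Cb / min (m 0) (m 1)) with hCvdef
  have hvb : ∀ s ∈ Ico (0:ℝ) T, ∀ i, ‖v s i‖ ≤ Cv := by
    intro s hs i
    have h2 : m i * ‖v s i‖ ^ 2 ≤ Cb := by
      have h := hkin s hs
      rcases fin2 i with rfl | rfl
      · nlinarith [mul_nonneg (hm 1).le (sq_nonneg ‖v s 1‖)]
      · nlinarith [mul_nonneg (hm 0).le (sq_nonneg ‖v s 0‖)]
    have hmin_le : min (m 0) (m 1) ≤ m i := by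
      rcases fin2 i with rfl | rfl
      exacts [min_le_left _ _, min_le_right _ _]
    have h3 : ‖v s i‖ ^ 2 ≤ Cb / min (m 0) (m 1) := by
      rw [le_div_iff₀ hminpos]
      nlinarith [sq_nonneg ‖v s i‖]
    calc ‖v s i‖ = Real.sqrt (‖v s i‖ ^ 2) := (Real.sqrt_sq (norm_nonneg _)).symm
      _ ≤ Cv := Real.sqrt_le_sqrt h3
  -- acceleration bound
  set Ca := α / ρ ^ (α + 1) with hCadef
  have hab : ∀ s ∈ Ico (0:ℝ) T, ∀ i, ‖accel α m (x s) i‖ ≤ Ca := fun s hs i =>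
    accel_norm_le hα hm hm1 (hsol s (hmemT hs)).1 hρ (le_of_lt (hplus s (hmemT hs)).2) i
  -- Lipschitz bounds
  have hxlip : ∀ i, ∀ s ∈ Ico (0:ℝ) T, ∀ t ∈ Ico (0:ℝ) T, ‖x t i - x s i‖ ≤ Cv * |t - s| := by
    intro i s hs t ht
    have := Convex.norm_image_sub_le_of_norm_hasDerivWithin_le
      (f := fun τ => x τ i) (f' := fun τ => v τ i) (C := Cv) (s := Ico (0:ℝ) T)
      (fun y hy => (((hsol y (hmemT hy)).2 i).1).hasDerivWithinAt)
      (fun y hy => hvb y hy i) (convex_Ico 0 T) hs ht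
    simpa [Real.norm_eq_abs] using this
  have hvlip : ∀ i, ∀ s ∈ Ico (0:ℝ) T, ∀ t ∈ Ico (0:ℝ) T, ‖v t i - v s i‖ ≤ Ca * |t - s| := by
    intro i s hs t ht
    have := Convex.norm_image_sub_le_of_norm_hasDerivWithin_le
      (f := fun τ => v τ i) (f' := fun τ => accel α m (x τ) i) (C := Ca) (s := Ico (0:ℝ) T)
      (fun y hy => (((hsol y (hmemT hy)).2 i).2).hasDerivWithinAt)
      (fun y hy => hab y hy i) (convex_Ico 0 T) hs ht
    simpa [Real.norm_eq_abs] using this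
  -- limits at T
  obtain ⟨X0, hX0⟩ := lip_limit hT (hxlip 0)
  obtain ⟨X1, hX1⟩ := lip_limit hT (hxlip 1)
  obtain ⟨V0, hV0⟩ := lip_limit hT (hvlip 0)
  obtain ⟨V1, hV1⟩ := lip_limit hT (hvlip 1)
  set XX : Fin 2 → E2 := ![X0, X1] with hXXdef
  set VV : Fin 2 → E2 := ![V0, V1] with hVVdef
  have hl : (𝓝[Ico (0:ℝ) T] T).NeBot := by
    rw [← mem_closure_iff_nhdsWithin_neBot, closure_Ico hT.ne]
    exact right_mem_Icc.2 hT.le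
  have htx : ∀ i, Tendsto (fun t => x t i) (𝓝[Ico (0:ℝ) T] T) (𝓝 (XX i)) := by
    intro i
    rcases fin2 i with rfl | rfl
    · simpa [hXXdef] using hX0
    · simpa [hXXdef] using hX1
  have htv : ∀ i, Tendsto (fun t => v t i) (𝓝[Ico (0:ℝ) T] T) (𝓝 (VV i)) := by
    intro i
    rcases fin2 i with rfl | rfl
    · simpa [hVVdef] using hV0
    · simpa [hVVdef] using hV1
  have htpair : Tendsto (fun t => ((x t, v t) : Phase)) (𝓝[Ico (0:ℝ) T] T) (𝓝 ((XX, VV) : Phase)) :=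
    Tendsto.prodMk_nhds (tendsto_pi_nhds.2 htx) (tendsto_pi_nhds.2 htv)
  have hsep : ρ ≤ ‖XX 0 - XX 1‖ := by
    have h1 : Tendsto (fun t => ‖x t 0 - x t 1‖) (𝓝[Ico (0:ℝ) T] T) (𝓝 ‖XX 0 - XX 1‖) :=
      ((htx 0).sub (htx 1)).norm
    apply ge_of_tendsto h1
    filter_upwards [eventually_mem_nhdsWithin] with s hs
    exact (hplus s (hmemT hs)).2.le
  have hXXne : XX 0 ≠ XX 1 := by
    intro h
    rw [h, sub_self, norm_zero] at hsep
    linarith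
  -- local solution through the limit point
  have hflowC : ContDiffAt ℝ 1 (flow α m) ((XX, VV) : Phase) := flow_contDiffAt hα hXXne
  obtain ⟨g, hgT, ε, hε, hg⟩ := ContDiffAt.exists_forall_mem_closedBall_exists_eq_forall_mem_Ioo_hasDerivAt₀ hflowC T
  have hgc : ContinuousAt g T := (hg T ⟨by linarith, by linarith⟩).continuousAt
  have hgsep_cont : ContinuousAt (fun s => ‖(g s).1 0 - (g s).1 1‖) T := by
    apply ContinuousAt.norm
    exact (((continuous_apply (0 : Fin 2)).comp continuous_fst).continuousAt.comp hgc).sub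
      (((continuous_apply (1 : Fin 2)).comp continuous_fst).continuousAt.comp hgc)
  have hposT : 0 < ‖(g T).1 0 - (g T).1 1‖ := by
    rw [hgT]
    exact norm_pos_iff.2 (sub_ne_zero.2 hXXne)
  obtain ⟨δ', hδ'pos, hδsep⟩ : ∃ δ' > (0:ℝ), ∀ s, |s - T| < δ' → (g s).1 0 ≠ (g s).1 1 := by
    have hev : (fun s => ‖(g s).1 0 - (g s).1 1‖) ⁻¹' (Ioi 0) ∈ 𝓝 T :=
      hgsep_cont (Ioi_mem_nhds hposT)
    obtain ⟨δ', hδ'pos, hball⟩ := Metric.mem_nhds_iff.1 hev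
    refine ⟨δ', hδ'pos, fun s hs => ?_⟩
    have : s ∈ Metric.ball T δ' := by
      rw [Metric.mem_ball, Real.dist_eq]; exact hs
    have h2 := hball this
    simp only [Set.mem_preimage, Set.mem_Ioi] at h2
    exact sub_ne_zero.1 (norm_pos_iff.1 h2)
  set δ := min (δ' / 2) (ε / 2) with hδdef
  have hδpos : 0 < δ := lt_min (by linarith) (by linarith)
  have hδδ' : δ < δ' := lt_of_le_of_lt (min_le_left _ _) (by linarith)
  have hδε : δ < ε := lt_of_le_of_lt (min_le_right _ _) (by linarith)
  -- the glued solution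
  set x' : ℝ → Fin 2 → E2 := fun t => if t < T then x t else (g t).1 with hx'def
  set v' : ℝ → Fin 2 → E2 := fun t => if t < T then v t else (g t).2 with hv'def
  have hDom' : Dom ((T + δ : ℝ) : EReal) = Ico 0 (T + δ) := by
    ext s
    constructor
    · rintro ⟨h1, h2⟩; exact ⟨h1, by exact_mod_cast h2⟩
    · rintro ⟨h1, h2⟩; exact ⟨h1, by exact_mod_cast h2⟩
  have hsol' : IsSolnOn α m x' v' (Dom ((T + δ : ℝ) : EReal)) := by
    intro t ht
    rw [hDom'] at ht
    rcases lt_trichotomy t T with hlt | heq | hgt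
    · -- before T : old solution
      have htD : t ∈ Dom ((T:ℝ):EReal) := hmemT ⟨ht.1, hlt⟩
      have hevx : ∀ i : Fin 2, (fun τ => x' τ i) =ᶠ[𝓝 t] (fun τ => x τ i) := by
        intro i
        filter_upwards [Iio_mem_nhds hlt] with τ hτ
        simp [hx'def, Set.mem_Iio.1 hτ]
      have hevv : ∀ i : Fin 2, (fun τ => v' τ i) =ᶠ[𝓝 t] (fun τ => v τ i) := by
        intro i
        filter_upwards [Iio_mem_nhds hlt] with τ hτ
        simp [hv'def, Set.mem_Iio.1 hτ]
      have hxt : x' t = x t := by simp [hx'def, hlt]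
      have hvt : v' t = v t := by simp [hv'def, hlt]
      refine ⟨by rw [hxt]; exact (hsol t htD).1, fun i => ⟨?_, ?_⟩⟩
      · have h := ((hsol t htD).2 i).1.congr_of_eventuallyEq (hevx i)
        rwa [hvt]
      · have h := ((hsol t htD).2 i).2.congr_of_eventuallyEq (hevv i)
        rwa [hxt]
    · -- at T : glue
      subst heq
      have hgd := hg t ⟨by linarith, by linarith⟩
      have hxT : x' t = XX := by simp [hx'def, hgT]
      have hvT : v' t = VV := by simp [hv'def, hgT]
      have hIoo_mem : Ioo (0:ℝ) t ∈ 𝓝[<] t := Ioo_mem_nhdsLT_of_mem ⟨hT, le_rfl⟩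
      have hIoo_filter : 𝓝[Iio t] t = 𝓝[Ioo (0:ℝ) t] t := by
        rw [nhdsWithin_restrict' (Iio t) (Ioi_mem_nhds hT), Set.Iio_inter_Ioi]
      refine ⟨by rw [hxT]; exact hXXne, fun i => ⟨?_, ?_⟩⟩
      · -- position derivative at T
        rw [hvT]
        have hright : HasDerivWithinAt (fun τ => x' τ i) (VV i) (Ici t) t := by
          have h1 := (hasDerivAt_pair_fst hgd i).hasDerivWithinAt (s := Ici t)
          have h1' : (flow α m (g t)).1 i = VV i := by rw [hgT]; rfl
          rw [h1'] at h1
          apply h1.congr_of_eventuallyEq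
          · filter_upwards [self_mem_nhdsWithin] with τ hτ
            simp [hx'def, not_lt.2 (mem_Ici.1 hτ)]
          · simp [hx'def]
        have hleft : HasDerivWithinAt (fun τ => x' τ i) (VV i) (Iic t) t := by
          apply hasDerivWithinAt_Iic_of_tendsto_deriv (s := Ioo (0:ℝ) t)
          · intro s hs
            have hsD := hmemT ⟨hs.1.le, hs.2⟩
            have hev : (fun τ => x' τ i) =ᶠ[𝓝 s] fun τ => x τ i := by
              filter_upwards [Iio_mem_nhds hs.2] with τ hτ
              simp [hx'def, Set.mem_Iio.1 hτ]
            exact (((hsol s hsD).2 i).1.congr_of_eventuallyEq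
              hev).differentiableAt.differentiableWithinAt
          · have h2 : Tendsto (fun τ => x τ i) (𝓝[Ioo (0:ℝ) t] t) (𝓝 (XX i)) :=
              (htx i).mono_left (nhdsWithin_mono _ Ioo_subset_Ico_self)
            have h3 : Tendsto (fun τ => x' τ i) (𝓝[Ioo (0:ℝ) t] t) (𝓝 (XX i)) := by
              apply h2.congr'
              filter_upwards [eventually_mem_nhdsWithin] with τ hτ
              simp [hx'def, hτ.2]
            have hfT : x' t i = XX i := by rw [hxT]
            rw [ContinuousWithinAt, hfT]
            exact h3
          · exact hIoo_mem
          · rw [hIoo_filter]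
            have h2 : Tendsto (fun τ => v τ i) (𝓝[Ioo (0:ℝ) t] t) (𝓝 (VV i)) :=
              (htv i).mono_left (nhdsWithin_mono _ Ioo_subset_Ico_self)
            apply h2.congr'
            filter_upwards [eventually_mem_nhdsWithin] with s hs
            have hsD := hmemT ⟨hs.1.le, hs.2⟩
            have hev : (fun τ => x' τ i) =ᶠ[𝓝 s] fun τ => x τ i := by
              filter_upwards [Iio_mem_nhds hs.2] with τ hτ
              simp [hx'def, Set.mem_Iio.1 hτ]
            exact (( ((hsol s hsD).2 i).1.congr_of_eventuallyEq hev).deriv).symm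
        have hu := hleft.union hright
        rw [Iic_union_Ici] at hu
        exact hasDerivWithinAt_univ.1 hu
      · -- velocity derivative at T
        rw [hxT]
        have hright : HasDerivWithinAt (fun τ => v' τ i) (accel α m XX i) (Ici t) t := by
          have h1 := (hasDerivAt_pair_snd hgd i).hasDerivWithinAt (s := Ici t)
          have h1' : (flow α m (g t)).2 i = accel α m XX i := by rw [hgT]; rfl
          rw [h1'] at h1
          apply h1.congr_of_eventuallyEq
          · filter_upwards [self_mem_nhdsWithin] with τ hτ
            simp [hv'def, not_lt.2 (mem_Ici.1 hτ)]
          · simp [hv'def]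
        have hleft : HasDerivWithinAt (fun τ => v' τ i) (accel α m XX i) (Iic t) t := by
          apply hasDerivWithinAt_Iic_of_tendsto_deriv (s := Ioo (0:ℝ) t)
          · intro s hs
            have hsD := hmemT ⟨hs.1.le, hs.2⟩
            have hev : (fun τ => v' τ i) =ᶠ[𝓝 s] fun τ => v τ i := by
              filter_upwards [Iio_mem_nhds hs.2] with τ hτ
              simp [hv'def, Set.mem_Iio.1 hτ]
            exact (((hsol s hsD).2 i).2.congr_of_eventuallyEq
              hev).differentiableAt.differentiableWithinAt
          · have h2 : Tendsto (fun τ => v τ i) (𝓝[Ioo (0:ℝ) t] t) (𝓝 (VV i)) :=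
              (htv i).mono_left (nhdsWithin_mono _ Ioo_subset_Ico_self)
            have h3 : Tendsto (fun τ => v' τ i) (𝓝[Ioo (0:ℝ) t] t) (𝓝 (VV i)) := by
              apply h2.congr'
              filter_upwards [eventually_mem_nhdsWithin] with τ hτ
              simp [hv'def, hτ.2]
            have hfT : v' t i = VV i := by rw [hvT]
            rw [ContinuousWithinAt, hfT]
            exact h3
          · exact hIoo_mem
          · rw [hIoo_filter]
            have hfl : Tendsto (fun s => flow α m (x s, v s)) (𝓝[Ico (0:ℝ) t] t)
                (𝓝 (flow α m ((XX, VV) : Phase))) := hflowC.continuousAt.tendsto.comp htpair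
            have hacc : Tendsto (fun s => accel α m (x s) i) (𝓝[Ico (0:ℝ) t] t)
                (𝓝 (accel α m XX i)) :=
              (((continuous_apply i).comp continuous_snd).continuousAt.tendsto.comp hfl)
            have h2 : Tendsto (fun s => accel α m (x s) i) (𝓝[Ioo (0:ℝ) t] t)
                (𝓝 (accel α m XX i)) := hacc.mono_left (nhdsWithin_mono _ Ioo_subset_Ico_self)
            apply h2.congr'
            filter_upwards [eventually_mem_nhdsWithin] with s hs
            have hsD := hmemT ⟨hs.1.le, hs.2⟩
            have hev : (fun τ => v' τ i) =ᶠ[𝓝 s] fun τ => v τ i := by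
              filter_upwards [Iio_mem_nhds hs.2] with τ hτ
              simp [hv'def, Set.mem_Iio.1 hτ]
            exact (( ((hsol s hsD).2 i).2.congr_of_eventuallyEq hev).deriv).symm
        have hu := hleft.union hright
        rw [Iic_union_Ici] at hu
        exact hasDerivWithinAt_univ.1 hu
    · -- after T : new local solution
      have hlow : T - ε < t := by linarith
      have hup : t < T + ε := by
        have : t < T + δ := ht.2
        linarith
      have hgd := hg t ⟨hlow, hup⟩
      have hxt : x' t = (g t).1 := if_neg (not_lt.2 hgt.le)
      have hvt : v' t = (g t).2 := if_neg (not_lt.2 hgt.le)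
      have hevx : ∀ i : Fin 2, (fun τ => x' τ i) =ᶠ[𝓝 t] (fun τ => (g τ).1 i) := by
        intro i
        filter_upwards [Ioi_mem_nhds hgt] with τ hτ
        simp [hx'def, not_lt.2 (le_of_lt (mem_Ioi.1 hτ))]
      have hevv : ∀ i : Fin 2, (fun τ => v' τ i) =ᶠ[𝓝 t] (fun τ => (g τ).2 i) := by
        intro i
        filter_upwards [Ioi_mem_nhds hgt] with τ hτ
        simp [hv'def, not_lt.2 (le_of_lt (mem_Ioi.1 hτ))]
      have hd : |t - T| < δ' := by
        rw [abs_of_pos (by linarith : (0:ℝ) < t - T)]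
        have : t < T + δ := ht.2
        linarith
      refine ⟨by rw [hxt]; exact hδsep t hd, fun i => ⟨?_, ?_⟩⟩
      · have h1 := (hasDerivAt_pair_fst hgd i).congr_of_eventuallyEq (hevx i)
        rw [hvt]
        exact h1
      · have h2 := (hasDerivAt_pair_snd hgd i).congr_of_eventuallyEq (hevv i)
        rw [hxt]
        exact h2
  have hagree : ∀ t ∈ Dom ((T:ℝ):EReal), x' t = x t ∧ v' t = v t := by
    intro t ht
    rw [hDom] at ht
    exact ⟨if_pos ht.2, if_pos ht.2⟩
  have hle := hmax' ((T + δ : ℝ) : EReal) x' v' hsol' hagree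
  rw [EReal.coe_le_coe_iff] at hle
  linarith

end Dynamics


/-- **Dichotomy for the two-body problem** (`α > 2`, `ω > 0`, `m₁ + m₂ = 1`,
center of mass at the origin): `K⁺(ω)` and `K⁻(ω)` are invariant; solutions starting in
`K⁺(ω)` exist globally and solutions starting in `K⁻(ω)` have a singularity in finite time. -/
theorem two_body_dichotomy (α ω : ℝ) (hα : 2 < α) (hω : 0 < ω)
    (m : Fin 2 → ℝ) (hm : ∀ i, 0 < m i) (hm1 : m 0 + m 1 = 1)
    (σ : EReal) (x v : ℝ → Fin 2 → E2) (hx : IsMaxSoln α m σ x v)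
    (hcom : ∀ t ∈ Dom σ, m 0 • x t 0 + m 1 • x t 1 = 0) :
    (memKplus α m ω (x 0) (v 0) → (∀ t ∈ Dom σ, memKplus α m ω (x t) (v t)) ∧ σ = ⊤) ∧
    (memKminus α m ω (x 0) (v 0) → (∀ t ∈ Dom σ, memKminus α m ω (x t) (v t)) ∧ σ < ⊤) := by
  constructor
  · intro hinit
    exact ⟨fun t ht => (Kplus_invariant hα hω hm hm1 hx.1 hx.2.1 hcom hinit t ht).1,
      Kplus_global hα hω hm hm1 hx hcom hinit⟩
  · intro hinit
    exact ⟨fun t ht => (Kminus_invariant hα hω hm hm1 hx.1 hx.2.1 hcom hinit t ht).1,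
      Kminus_singular hα hω hm hm1 hx.1 hx.2.1 hcom hinit⟩

end
end TwoBodyPaper
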